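/- Let G be a finite connected graph with at least one edge and let r ≥ 2 be an integer. Let G' be the graph obtained from G by adding, for each edge v_i v_j of G, a new path of length 2r from v_i to v_j whose internal vertices are new and distinct for distinct edges, while keeping the edge v_i v_j (so that each edge of G lies on a cycle of length 2r+1 in G'). Then γ_r(G') = τ(G), and every minimum vertex cover of G is a minimum distance-r dominating set of G'. -/

import Mathlib

/-- `D` is a distance-`r` dominating set of `G`. -/
def IsDrDS {V : Type*} (G : SimpleGraph V) (r : ℕ) (D : Set V) : Prop :=
  ∀ v : V, ∃ u ∈ D, G.Reachable u v ∧ G.dist u v ≤ r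

/-- `γ_r(G)`: the minimum size of a distance-`r` dominating set of `G`. -/
noncomputable def gammaR {V : Type*} (G : SimpleGraph V) (r : ℕ) : ℕ :=
  sInf {n | ∃ D : Set V, IsDrDS G r D ∧ D.ncard = n}

/-- `C` is a vertex cover of `G`. -/
def IsVC {V : Type*} (G : SimpleGraph V) (C : Set V) : Prop :=
  ∀ u v : V, G.Adj u v → u ∈ C ∨ v ∈ C

/-- `τ(G)`: the minimum size of a vertex cover of `G`. -/
noncomputable def tau {V : Type*} (G : SimpleGraph V) : ℕ :=
  sInf {n | ∃ C : Set V, IsVC G C ∧ C.ncard = n}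

/-- Index type for the edges of `G`: each edge is recorded as its ordered pair
of endpoints `(u, v)` with `u < v`. -/
abbrev EdgeIdx {V : Type*} [LinearOrder V] (G : SimpleGraph V) : Type _ :=
  {p : V × V // G.Adj p.1 p.2 ∧ p.1 < p.2}

/-- Vertex type of the graph `G'` obtained from `G` by adding, for each edge
`(u, v)` of `G`, a new `u`–`v` path of length `2r` (with `2r - 1` new internal
vertices), while keeping all edges of `G`. -/
abbrev VPrime {V : Type*} [LinearOrder V] (G : SimpleGraph V) (r : ℕ) : Type _ :=
  V ⊕ (EdgeIdx G × Fin (2 * r - 1))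

/-- The base (one-directional) adjacency relation of `G'`: the original edges of
`G` together with the added paths. -/
def relPrime {V : Type*} [LinearOrder V] (G : SimpleGraph V) (r : ℕ) :
    VPrime G r → VPrime G r → Prop := fun p q =>
  -- the original edges of `G` are kept
  (∃ a b : V, G.Adj a b ∧ p = Sum.inl a ∧ q = Sum.inl b) ∨
  -- first internal vertex of the path added for `e` is adjacent to `e.1`
  (∃ (e : EdgeIdx G) (i : Fin (2 * r - 1)), (i : ℕ) = 0 ∧
      p = Sum.inl e.1.1 ∧ q = Sum.inr (e, i)) ∨
  -- consecutive internal vertices of the path added for `e` are adjacent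
  (∃ (e : EdgeIdx G) (i j : Fin (2 * r - 1)), (j : ℕ) = (i : ℕ) + 1 ∧
      p = Sum.inr (e, i) ∧ q = Sum.inr (e, j)) ∨
  -- last internal vertex of the path added for `e` is adjacent to `e.2`
  (∃ (e : EdgeIdx G) (i : Fin (2 * r - 1)), (i : ℕ) = 2 * r - 2 ∧
      p = Sum.inr (e, i) ∧ q = Sum.inl e.1.2)

/-- The graph `G'` of the construction. -/
def GPrime {V : Type*} [LinearOrder V] (G : SimpleGraph V) (r : ℕ) :
    SimpleGraph (VPrime G r) :=
  SimpleGraph.fromRel (relPrime G r)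

/-!
If `C` covers the edges of `G`, then in `G'` every original vertex lies in `C` or is adjacent to
it (`G` has no isolated vertices), and every vertex of the path added for an edge `uv` is within
distance `r` of whichever endpoint lies in `C`, going around the `(2r+1)`-cycle formed by the path
and the edge `uv`. Conversely, the middle vertex of the path added for `uv` is more than `r` away
from every vertex other than `u`, `v` and the vertices of that path, so a distance-`r` dominating
set meets every such gadget; sending each path vertex to an endpoint of its edge turns it into a
vertex cover that is no larger.
-/

open SimpleGraph

lemma SimpleGraph.Walk.reachable_and_dist_le {V : Type*} {G : SimpleGraph V} {u v : V}
    (p : G.Walk u v) {n : ℕ} (h : p.length ≤ n) : G.Reachable u v ∧ G.dist u v ≤ n :=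
  ⟨p.reachable, (G.dist_le p).trans h⟩

lemma SimpleGraph.Walk.le_add_length_of_adj_le {V : Type*} {G : SimpleGraph V} {f : V → ℕ}
    (hf : ∀ x y, G.Adj x y → f y ≤ f x + 1) {u v : V} (p : G.Walk u v) :
    f v ≤ f u + p.length := by
  induction p with
  | nil => simp
  | cons hadj _ ih =>
    rw [Walk.length_cons]
    have := hf _ _ hadj
    omega

lemma SimpleGraph.Reachable.le_add_dist_of_adj_le {V : Type*} {G : SimpleGraph V} {f : V → ℕ}
    (hf : ∀ x y, G.Adj x y → f y ≤ f x + 1) {u v : V} (h : G.Reachable u v) :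
    f v ≤ f u + G.dist u v := by
  obtain ⟨p, hp⟩ := h.exists_walk_length_eq_dist
  exact hp ▸ p.le_add_length_of_adj_le hf

section Extremal

variable {V : Type*} {G : SimpleGraph V}

lemma tau_le_ncard {C : Set V} (hC : IsVC G C) : tau G ≤ C.ncard :=
  Nat.sInf_le ⟨C, hC, rfl⟩

lemma exists_isVC_ncard_eq_tau : ∃ C : Set V, IsVC G C ∧ C.ncard = tau G :=
  Nat.sInf_mem (s := {n | ∃ C : Set V, IsVC G C ∧ C.ncard = n}) ⟨_, Set.univ, fun _ _ _ => Or.inl trivial, rfl⟩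

lemma gammaR_le_ncard {r : ℕ} {D : Set V} (hD : IsDrDS G r D) : gammaR G r ≤ D.ncard :=
  Nat.sInf_le ⟨D, hD, rfl⟩

lemma exists_isDrDS_ncard_eq_gammaR (r : ℕ) :
    ∃ D : Set V, IsDrDS G r D ∧ D.ncard = gammaR G r :=
  Nat.sInf_mem (s := {n | ∃ D : Set V, IsDrDS G r D ∧ D.ncard = n}) ⟨_, Set.univ, fun v => ⟨v, trivial, Reachable.refl v, by simp⟩, rfl⟩

end Extremal

namespace GPrime

variable {V : Type*} [LinearOrder V] {G : SimpleGraph V} {r : ℕ}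

lemma adj_inl_inl {a b : V} (h : G.Adj a b) :
    (GPrime G r).Adj (Sum.inl a) (Sum.inl b) := by
  rw [GPrime, fromRel_adj]
  exact ⟨by simp [h.ne], Or.inl (Or.inl ⟨a, b, h, rfl, rfl⟩)⟩

lemma adj_path_start (e : EdgeIdx G) (i : Fin (2 * r - 1)) (hi : (i : ℕ) = 0) :
    (GPrime G r).Adj (Sum.inl e.1.1) (Sum.inr (e, i)) := by
  rw [GPrime, fromRel_adj]
  exact ⟨by simp, Or.inl (Or.inr (Or.inl ⟨e, i, hi, rfl, rfl⟩))⟩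

lemma adj_path_succ (e : EdgeIdx G) (i j : Fin (2 * r - 1)) (h : (j : ℕ) = i + 1) :
    (GPrime G r).Adj (Sum.inr (e, i)) (Sum.inr (e, j)) := by
  rw [GPrime, fromRel_adj]
  refine ⟨?_, Or.inl (Or.inr (Or.inr (Or.inl ⟨e, i, j, h, rfl, rfl⟩)))⟩
  simp only [ne_eq, Sum.inr.injEq, Prod.mk.injEq, not_and]
  rintro - rfl
  omega

lemma adj_path_end (e : EdgeIdx G) (i : Fin (2 * r - 1)) (hi : (i : ℕ) = 2 * r - 2) :
    (GPrime G r).Adj (Sum.inr (e, i)) (Sum.inl e.1.2) := by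
  rw [GPrime, fromRel_adj]
  exact ⟨by simp, Or.inl (Or.inr (Or.inr (Or.inr ⟨e, i, hi, rfl, rfl⟩)))⟩

lemma exists_walk_fst_path (e : EdgeIdx G) (i : Fin (2 * r - 1)) :
    ∃ p : (GPrime G r).Walk (Sum.inl e.1.1) (Sum.inr (e, i)), p.length = i + 1 := by
  obtain ⟨i, hi⟩ := i
  induction i with
  | zero => exact ⟨(adj_path_start e ⟨0, hi⟩ rfl).toWalk, rfl⟩
  | succ n ih =>
    obtain ⟨p, hp⟩ := ih (by omega)
    exact ⟨p.concat (adj_path_succ e ⟨n, by omega⟩ ⟨n + 1, hi⟩ rfl), by simp [hp]⟩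

lemma exists_walk_snd_path (e : EdgeIdx G) (i : Fin (2 * r - 1)) :
    ∃ p : (GPrime G r).Walk (Sum.inl e.1.2) (Sum.inr (e, i)), p.length = 2 * r - 1 - i := by
  suffices h : ∀ k (i : Fin (2 * r - 1)), (i : ℕ) + k = 2 * r - 2 →
      ∃ p : (GPrime G r).Walk (Sum.inl e.1.2) (Sum.inr (e, i)), p.length = k + 1 by
    obtain ⟨p, hp⟩ := h (2 * r - 2 - i) i (by omega)
    exact ⟨p, by omega⟩
  intro k
  induction k with
  | zero => exact fun i hi => ⟨(adj_path_end e i (by omega)).symm.toWalk, rfl⟩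
  | succ k ih =>
    intro i hi
    obtain ⟨p, hp⟩ := ih ⟨i + 1, by omega⟩ (by simp only; omega)
    exact ⟨p.concat (adj_path_succ e i ⟨i + 1, by omega⟩ rfl).symm, by simp [hp]⟩

lemma exists_walk_fst_path_length_le (e : EdgeIdx G) (i : Fin (2 * r - 1)) :
    ∃ p : (GPrime G r).Walk (Sum.inl e.1.1) (Sum.inr (e, i)), p.length ≤ r := by
  by_cases hi : (i : ℕ) + 1 ≤ r
  · obtain ⟨p, hp⟩ := exists_walk_fst_path e i
    exact ⟨p, hp ▸ hi⟩
  · obtain ⟨p, hp⟩ := exists_walk_snd_path e i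
    refine ⟨(adj_inl_inl e.2.1).toWalk.append p, ?_⟩
    simp only [Walk.length_append, Walk.length_cons, Walk.length_nil, hp]
    omega

lemma exists_walk_snd_path_length_le (e : EdgeIdx G) (i : Fin (2 * r - 1)) :
    ∃ p : (GPrime G r).Walk (Sum.inl e.1.2) (Sum.inr (e, i)), p.length ≤ r := by
  by_cases hi : r - 1 ≤ (i : ℕ)
  · obtain ⟨p, hp⟩ := exists_walk_snd_path e i
    exact ⟨p, by omega⟩
  · obtain ⟨p, hp⟩ := exists_walk_fst_path e i
    refine ⟨(adj_inl_inl e.2.1).symm.toWalk.append p, ?_⟩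
    simp only [Walk.length_append, Walk.length_cons, Walk.length_nil, hp]
    omega

lemma isDrDS_image_inl_of_isVC (hG : ∀ w : V, ∃ x, G.Adj w x) (hr : 1 ≤ r) {C : Set V}
    (hC : IsVC G C) : IsDrDS (GPrime G r) r (Sum.inl '' C) := by
  rintro (w | ⟨e, i⟩)
  · obtain ⟨x, hwx⟩ := hG w
    rcases hC w x hwx with hw | hx
    · exact ⟨_, ⟨w, hw, rfl⟩, Walk.nil.reachable_and_dist_le (Nat.zero_le r)⟩
    · exact ⟨_, ⟨x, hx, rfl⟩, (adj_inl_inl hwx.symm).toWalk.reachable_and_dist_le hr⟩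
  · rcases hC e.1.1 e.1.2 e.2.1 with h | h
    · obtain ⟨p, hp⟩ := exists_walk_fst_path_length_le e i
      exact ⟨_, ⟨_, h, rfl⟩, p.reachable_and_dist_le hp⟩
    · obtain ⟨p, hp⟩ := exists_walk_snd_path_length_le e i
      exact ⟨_, ⟨_, h, rfl⟩, p.reachable_and_dist_le hp⟩

/-- A 1-Lipschitz lower bound for the distance to the middle vertex `(e, r - 1)` of the path added
for `e`. -/
def midDistBound (e : EdgeIdx G) : VPrime G r → ℕ
  | Sum.inl w => if w = e.1.1 ∨ w = e.1.2 then r else r + 1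
  | Sum.inr (e', j) => if e' = e then Nat.dist j (r - 1) else r + 1

lemma midDistBound_le_succ_of_adj (e : EdgeIdx G) {x y : VPrime G r}
    (h : (GPrime G r).Adj x y) : midDistBound e y ≤ midDistBound e x + 1 := by
  suffices key : ∀ a b, relPrime G r a b →
      midDistBound e b ≤ midDistBound e a + 1 ∧ midDistBound e a ≤ midDistBound e b + 1 by
    rw [GPrime, fromRel_adj] at h
    rcases h.2 with h | h
    exacts [(key _ _ h).1, (key _ _ h).2]
  rintro a b (⟨c, d, -, rfl, rfl⟩ | ⟨e', i, hi, rfl, rfl⟩ | ⟨e', i, j, hij, rfl, rfl⟩ |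
    ⟨e', i, hi, rfl, rfl⟩)
  · simp only [midDistBound]; split_ifs <;> omega
  all_goals
    by_cases he : e' = e
    · subst he; simp [midDistBound, Nat.dist, *]; omega
    · simp only [midDistBound, if_neg he]; (try split_ifs) <;> omega

lemma midDistBound_le_add_dist (e : EdgeIdx G) {x y : VPrime G r}
    (h : (GPrime G r).Reachable x y) :
    midDistBound e y ≤ midDistBound e x + (GPrime G r).dist x y :=
  h.le_add_dist_of_adj_le fun _ _ => midDistBound_le_succ_of_adj e

def baseVertex : VPrime G r → V
  | Sum.inl w => w
  | Sum.inr (e, _) => e.1.1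

lemma exists_mem_baseVertex_eq_of_isDrDS (hr : 1 ≤ r) {D : Set (VPrime G r)}
    (hD : IsDrDS (GPrime G r) r D) (e : EdgeIdx G) :
    ∃ d ∈ D, baseVertex d = e.1.1 ∨ baseVertex d = e.1.2 := by
  let mid : VPrime G r := Sum.inr (e, ⟨r - 1, by omega⟩)
  obtain ⟨d, hd, hreach, hdist⟩ := hD mid
  have hmid : midDistBound e mid = 0 := by simp [mid, midDistBound]
  have hbound : midDistBound e d ≤ r := by
    have := midDistBound_le_add_dist e hreach.symm
    rw [dist_comm] at this
    omega
  refine ⟨d, hd, ?_⟩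
  rcases d with w | ⟨e', j⟩
  · by_cases hw : w = e.1.1 ∨ w = e.1.2
    · exact hw
    · simp [midDistBound, hw] at hbound
  · by_cases he : e' = e
    · exact Or.inl (by simp [baseVertex, he])
    · simp [midDistBound, he] at hbound

lemma isVC_image_baseVertex_of_isDrDS (hr : 1 ≤ r) {D : Set (VPrime G r)}
    (hD : IsDrDS (GPrime G r) r D) : IsVC G (baseVertex '' D) := by
  intro a b hab
  rcases lt_or_gt_of_ne hab.ne with h | h
  · obtain ⟨d, hd, had | hbd⟩ := exists_mem_baseVertex_eq_of_isDrDS hr hD ⟨(a, b), hab, h⟩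
    exacts [Or.inl ⟨d, hd, had⟩, Or.inr ⟨d, hd, hbd⟩]
  · obtain ⟨d, hd, hbd | had⟩ := exists_mem_baseVertex_eq_of_isDrDS hr hD ⟨(b, a), hab.symm, h⟩
    exacts [Or.inr ⟨d, hd, hbd⟩, Or.inl ⟨d, hd, had⟩]

end GPrime

theorem stmt18 {V : Type*} [Fintype V] [LinearOrder V] (G : SimpleGraph V)
    (hconn : G.Connected) (hedge : ∃ a b : V, G.Adj a b)
    (r : ℕ) (hr : 2 ≤ r) :
    gammaR (GPrime G r) r = tau G ∧
    ∀ C : Set V, IsVC G C → C.ncard = tau G →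
      IsDrDS (GPrime G r) r (Sum.inl '' C) ∧
      (Sum.inl '' C : Set (VPrime G r)).ncard = gammaR (GPrime G r) r := by
  have hG : ∀ w : V, ∃ x, G.Adj w x := by
    obtain ⟨a, b, hab⟩ := hedge
    have := hab.nontrivial
    exact hconn.preconnected.exists_adj_of_nontrivial
  have hr1 : 1 ≤ r := by omega
  have hcover {C : Set V} (hC : IsVC G C) := GPrime.isDrDS_image_inl_of_isVC hG hr1 hC
  have hcard (C : Set V) : (Sum.inl '' C : Set (VPrime G r)).ncard = C.ncard :=
    Set.ncard_image_of_injective _ Sum.inl_injective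
  obtain ⟨C₀, hC₀, hC₀card⟩ := exists_isVC_ncard_eq_tau (G := G)
  obtain ⟨D₀, hD₀, hD₀card⟩ := exists_isDrDS_ncard_eq_gammaR (G := GPrime G r) r
  have hgamma : gammaR (GPrime G r) r = tau G := by
    apply le_antisymm
    · calc gammaR (GPrime G r) r ≤ (Sum.inl '' C₀ : Set (VPrime G r)).ncard :=
            gammaR_le_ncard (hcover hC₀)
        _ = tau G := by rw [hcard, hC₀card]
    · calc tau G ≤ (GPrime.baseVertex '' D₀).ncard :=
            tau_le_ncard (GPrime.isVC_image_baseVertex_of_isDrDS hr1 hD₀)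
        _ ≤ D₀.ncard := Set.ncard_image_le D₀.toFinite
        _ = gammaR (GPrime G r) r := hD₀card
  exact ⟨hgamma, fun C hC hCcard => ⟨hcover hC, by rw [hcard, hCcard, hgamma]⟩⟩
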